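/- arXiv:1901.10422 — 7 statements merged into one kernel-verified Lean document; each statement's English description precedes it below -/
import Mathlib

section
/- Let P and Q be probability measures on a finite set X, and let s be a uniform random bit. Define joint distributions on X × {0,1} by P'(x,0)=P(x)/2, P'(x,1)=Q(x)/2 and Q'(x,0)=Q(x)/2, Q'(x,1)=P(x)/2. Then the Jensen-Shannon divergence satisfies D_JS(P' ‖ Q') = D_JS(P ‖ Q). -/
noncomputable def klDivF {X : Type*} [Fintype X] (P Q : X → ℝ) : ℝ :=
  ∑ x, P x * Real.log (P x / Q x)

noncomputable def jsDivF {X : Type*} [Fintype X] (P Q : X → ℝ) : ℝ :=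
  (klDivF P (fun x => (P x + Q x) / 2) + klDivF Q (fun x => (P x + Q x) / 2)) / 2

def IsProbF {X : Type*} [Fintype X] (P : X → ℝ) : Prop :=
  (∀ x, 0 ≤ P x) ∧ ∑ x, P x = 1

theorem stmt0 {X : Type*} [Fintype X] (P Q : X → ℝ) (hP : IsProbF P) (hQ : IsProbF Q) :
    jsDivF (fun p : X × Bool => if p.2 then Q p.1 / 2 else P p.1 / 2)
      (fun p : X × Bool => if p.2 then P p.1 / 2 else Q p.1 / 2) = jsDivF P Q := by
  have hlog : ∀ a b : ℝ, (a / 2) / ((a/2 + b/2) / 2) = a / ((a + b) / 2) := by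
    intro a b
    rcases eq_or_ne (a + b) 0 with h | h
    · have : a/2 + b/2 = 0 := by linarith
      simp [h, this]
    · have h2 : a/2 + b/2 ≠ 0 := by intro hc; apply h; linarith
      field_simp
  have e1 : ∀ a b : ℝ, a / 2 * Real.log (a/2 / ((a/2 + b/2)/2))
      = (a * Real.log (a / ((a+b)/2))) / 2 := by
    intro a b; rw [hlog]; ring
  have e3 : ∀ a b : ℝ, a / 2 * Real.log (a/2 / ((b/2 + a/2)/2))
      = (a * Real.log (a / ((a+b)/2))) / 2 := by
    intro a b; rw [show b/2 + a/2 = a/2 + b/2 by ring, hlog]; ring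
  unfold jsDivF klDivF
  simp only [Fintype.sum_prod_type, Fintype.sum_bool, if_true, if_false, Bool.false_eq_true,
    ite_true, ite_false, e1, e3]
  rw [Finset.sum_add_distrib, Finset.sum_add_distrib]
  have ec : ∑ x : X, Q x * Real.log (Q x / ((Q x + P x) / 2)) / 2
      = ∑ x : X, Q x * Real.log (Q x / ((P x + Q x) / 2)) / 2 :=
    Finset.sum_congr rfl (fun x _ => by rw [add_comm (Q x) (P x)])
  rw [ec]
  simp only [← Finset.sum_div]
  ring
end

section
/- Let P and Q be probability measures on a finite set X and let P', Q' be the joint distributions on X × {0,1} defined by P'(x,0)=P(x)/2, P'(x,1)=Q(x)/2, Q'(x,0)=Q(x)/2, Q'(x,1)=P(x)/2. Then D_JS(P' ‖ Q') = (I_{P'}(x;s) + I_{Q'}(x;s))/2, where I_{P'} and I_{Q'} denote the mutual information of the two coordinates under P' and Q' respectively. -/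
noncomputable def margXF {X S : Type*} [Fintype X] [Fintype S] (μ : X × S → ℝ) (x : X) : ℝ :=
  ∑ s, μ (x, s)

noncomputable def margSF {X S : Type*} [Fintype X] [Fintype S] (μ : X × S → ℝ) (s : S) : ℝ :=
  ∑ x, μ (x, s)

noncomputable def mutInfoF {X S : Type*} [Fintype X] [Fintype S] (μ : X × S → ℝ) : ℝ :=
  klDivF μ (fun p => margXF μ p.1 * margSF μ p.2)

theorem stmt3 {X : Type*} [Fintype X] (P Q : X → ℝ) (hP : IsProbF P) (hQ : IsProbF Q)
    (P' Q' : X × Bool → ℝ)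
    (hP' : ∀ p, P' p = if p.2 then Q p.1 / 2 else P p.1 / 2)
    (hQ' : ∀ p, Q' p = if p.2 then P p.1 / 2 else Q p.1 / 2) :
    jsDivF P' Q' = (mutInfoF P' + mutInfoF Q') / 2 := by
  obtain ⟨hP0, hP1⟩ := hP
  obtain ⟨hQ0, hQ1⟩ := hQ
  have hmXP : ∀ x, margXF P' x = (P x + Q x) / 2 := by
    intro x
    simp only [margXF, Fintype.sum_bool, hP']
    simp; ring
  have hmXQ : ∀ x, margXF Q' x = (P x + Q x) / 2 := by
    intro x
    simp only [margXF, Fintype.sum_bool, hQ']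
    simp; ring
  have hmSP : ∀ s, margSF P' s = 1 / 2 := by
    intro s
    cases s <;> simp only [margSF, hP'] <;> simp <;>
      rw [← Finset.sum_div] <;> simp [hP1, hQ1]
  have hmSQ : ∀ s, margSF Q' s = 1 / 2 := by
    intro s
    cases s <;> simp only [margSF, hQ'] <;> simp <;>
      rw [← Finset.sum_div] <;> simp [hP1, hQ1]
  have hmid : (fun p => (P' p + Q' p) / 2) = fun p : X × Bool => (P p.1 + Q p.1) / 4 := by
    funext p
    rw [hP' p, hQ' p]
    cases p.2 <;> simp <;> ring
  have hprodP : (fun p : X × Bool => margXF P' p.1 * margSF P' p.2)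
      = fun p : X × Bool => (P p.1 + Q p.1) / 4 := by
    funext p; rw [hmXP, hmSP]; ring
  have hprodQ : (fun p : X × Bool => margXF Q' p.1 * margSF Q' p.2)
      = fun p : X × Bool => (P p.1 + Q p.1) / 4 := by
    funext p; rw [hmXQ, hmSQ]; ring
  unfold jsDivF mutInfoF
  rw [hmid, hprodP, hprodQ]
end

section
/- Let P_d and P_g be probability measures on a finite set X, and define iteratively for l ≥ 1 the joint distributions on X × {0,1}^l: P_l(x, s_{1..l}) = P_{l-1}(x, s_{1..l-1})·[s_l = 0]/2 + Q_{l-1}(x, s_{1..l-1})·[s_l = 1]/2 and Q_l(x, s_{1..l}) = Q_{l-1}(x, s_{1..l-1})·[s_l = 0]/2 + P_{l-1}(x, s_{1..l-1})·[s_l = 1]/2, with P_0 = P_d and Q_0 = P_g. Then for every l ≥ 0, D_JS(P_l ‖ Q_l) = D_JS(P_d ‖ P_g). -/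
noncomputable def PAl {X : Type*} : (l : ℕ) → (P Q : X → ℝ) → X × (Fin l → Bool) → ℝ
  | 0, P, _, p => P p.1
  | (l + 1), P, Q, p =>
      if p.2 (Fin.last l) then PAl l Q P (p.1, fun i => p.2 i.castSucc) / 2
      else PAl l P Q (p.1, fun i => p.2 i.castSucc) / 2

lemma sum_snoc_aux {X : Type*} [Fintype X] (l : ℕ) (g : X × (Fin (l + 1) → Bool) → ℝ) :
    ∑ p, g p =
      ∑ q : X × (Fin l → Bool), (g (q.1, Fin.snoc q.2 false) + g (q.1, Fin.snoc q.2 true)) := by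
  rw [Fintype.sum_prod_type, Fintype.sum_prod_type]
  refine Finset.sum_congr rfl fun x _ => ?_
  rw [← Equiv.sum_comp (Fin.snocEquiv (fun _ => Bool)) (fun s => g (x, s)),
    Fintype.sum_prod_type, Fintype.sum_bool]
  simp only [Fin.snocEquiv, Equiv.coe_fn_mk]
  rw [Finset.sum_add_distrib, add_comm]

lemma PAl_snoc_false {X : Type*} (l : ℕ) (R S : X → ℝ) (q : X × (Fin l → Bool)) :
    PAl (l + 1) R S (q.1, Fin.snoc q.2 false) = PAl l R S q / 2 := by
  have h : (fun i : Fin l => (Fin.snoc q.2 false : Fin (l+1) → Bool) i.castSucc) = q.2 := by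
    funext i; simp
  simp [PAl, h]

lemma PAl_snoc_true {X : Type*} (l : ℕ) (R S : X → ℝ) (q : X × (Fin l → Bool)) :
    PAl (l + 1) R S (q.1, Fin.snoc q.2 true) = PAl l S R q / 2 := by
  have h : (fun i : Fin l => (Fin.snoc q.2 true : Fin (l+1) → Bool) i.castSucc) = q.2 := by
    funext i; simp
  simp [PAl, h]

lemma ratio_aux0 (a b : ℝ) : a / 2 / ((a / 2 + b / 2) / 2) = a / ((a + b) / 2) := by
  rcases eq_or_ne (a + b) 0 with h | h
  · have h2 : a / 2 + b / 2 = 0 := by linarith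
    rw [h, h2]; simp
  · have h2 : a / 2 + b / 2 ≠ 0 := by intro h2; apply h; linarith
    field_simp

lemma r1 (a b : ℝ) : a / 2 / ((a / 2 + b / 2) / 2) = a / ((a + b) / 2) := ratio_aux0 a b

lemma r2 (a b : ℝ) : b / 2 / ((a / 2 + b / 2) / 2) = b / ((a + b) / 2) := by
  rw [add_comm (a / 2), add_comm a]; exact ratio_aux0 b a

lemma step_aux {X : Type*} [Fintype X] (l : ℕ) (P Q : X → ℝ) :
    jsDivF (PAl (l + 1) P Q) (PAl (l + 1) Q P) = jsDivF (PAl l P Q) (PAl l Q P) := by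
  unfold jsDivF klDivF
  rw [sum_snoc_aux, sum_snoc_aux]
  have key : ∀ q : X × (Fin l → Bool),
      (PAl (l+1) P Q (q.1, Fin.snoc q.2 false) *
        Real.log (PAl (l+1) P Q (q.1, Fin.snoc q.2 false) /
          ((PAl (l+1) P Q (q.1, Fin.snoc q.2 false) + PAl (l+1) Q P (q.1, Fin.snoc q.2 false)) / 2)) +
       PAl (l+1) P Q (q.1, Fin.snoc q.2 true) *
        Real.log (PAl (l+1) P Q (q.1, Fin.snoc q.2 true) /
          ((PAl (l+1) P Q (q.1, Fin.snoc q.2 true) + PAl (l+1) Q P (q.1, Fin.snoc q.2 true)) / 2)))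
      = (PAl l P Q q * Real.log (PAl l P Q q / ((PAl l P Q q + PAl l Q P q) / 2)) +
         PAl l Q P q * Real.log (PAl l Q P q / ((PAl l P Q q + PAl l Q P q) / 2))) / 2 := by
    intro q
    simp only [PAl_snoc_false, PAl_snoc_true]
    rw [r1, r1]
    ring_nf
  have key2 : ∀ q : X × (Fin l → Bool),
      (PAl (l+1) Q P (q.1, Fin.snoc q.2 false) *
        Real.log (PAl (l+1) Q P (q.1, Fin.snoc q.2 false) /
          ((PAl (l+1) P Q (q.1, Fin.snoc q.2 false) + PAl (l+1) Q P (q.1, Fin.snoc q.2 false)) / 2)) +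
       PAl (l+1) Q P (q.1, Fin.snoc q.2 true) *
        Real.log (PAl (l+1) Q P (q.1, Fin.snoc q.2 true) /
          ((PAl (l+1) P Q (q.1, Fin.snoc q.2 true) + PAl (l+1) Q P (q.1, Fin.snoc q.2 true)) / 2)))
      = (PAl l Q P q * Real.log (PAl l Q P q / ((PAl l P Q q + PAl l Q P q) / 2)) +
         PAl l P Q q * Real.log (PAl l P Q q / ((PAl l P Q q + PAl l Q P q) / 2))) / 2 := by
    intro q
    simp only [PAl_snoc_false, PAl_snoc_true]
    rw [r2, r2]
    ring_nf
  rw [Finset.sum_congr rfl (fun q _ => key q), Finset.sum_congr rfl (fun q _ => key2 q),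
    ← Finset.sum_div, ← Finset.sum_div, Finset.sum_add_distrib, Finset.sum_add_distrib]
  ring

theorem stmt4 {X : Type*} [Fintype X] (P Q : X → ℝ) (hP : IsProbF P) (hQ : IsProbF Q) :
    ∀ l : ℕ, jsDivF (PAl l P Q) (PAl l Q P) = jsDivF P Q := by
  intro l
  induction l with
  | zero =>
      unfold jsDivF klDivF
      rw [Fintype.sum_prod_type, Fintype.sum_prod_type]
      simp [PAl]
  | succ l ih => rw [step_aux, ih]
end

section
/- Let P_d and P_g be probability measures on a finite set X, and P_l, Q_l be the level-l progressively augmented joint distributions on X × {0,1}^l (defined by the recursion P_l(x,s,b) = P_{l-1}(x,s)[b=0]/2 + Q_{l-1}(x,s)[b=1]/2, Q_l(x,s,b) = Q_{l-1}(x,s)[b=0]/2 + P_{l-1}(x,s)[b=1]/2, P_0 = P_d, Q_0 = P_g). Then for every point (x, s_{1..l}), one has P_l(x, s_{1..l}) = P_d(x)/2^l if the parity (XOR) of the bits s_1,…,s_l is 0, and P_l(x, s_{1..l}) = P_g(x)/2^l if the parity is 1; symmetrically for Q_l with the roles of P_d and P_g swapped. -/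
lemma card_succ_aux {l : ℕ} (s : Fin (l + 1) → Bool) :
    (Finset.univ.filter (fun i => s i = true)).card =
      (Finset.univ.filter (fun i : Fin l => s i.castSucc = true)).card +
        (if s (Fin.last l) then 1 else 0) := by
  rw [Finset.card_filter, Finset.card_filter, Fin.sum_univ_castSucc]

theorem stmt5 {X : Type*} [Fintype X] (P Q : X → ℝ) (hP : IsProbF P) (hQ : IsProbF Q) :
    ∀ (l : ℕ) (x : X) (s : Fin l → Bool),
      PAl l P Q (x, s) =
        (if (Finset.univ.filter (fun i => s i = true)).card % 2 = 1 then Q x else P x) / 2 ^ l ∧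
      PAl l Q P (x, s) =
        (if (Finset.univ.filter (fun i => s i = true)).card % 2 = 1 then P x else Q x) / 2 ^ l := by
  intro l
  induction l with
  | zero => intro x s; simp [PAl]
  | succ l ih =>
    intro x s
    have h := ih x (fun i => s i.castSucc)
    rw [card_succ_aux s]
    cases hb : s (Fin.last l) <;>
      simp only [PAl, hb, if_true, if_false, h.1, h.2, Bool.false_eq_true] <;>
      constructor <;>
      · rw [pow_succ]
        split_ifs <;> first | ring1 | (exfalso; omega)
end

section
/- Let P_d, P_g be probability measures on a finite set X with P_d(x) + P_g(x) > 0 for all x, and let P_l, Q_l be the level-l progressively augmented joint distributions on X × {0,1}^l. Then the function D*(x, s) = P_l(x,s)/(P_l(x,s) + Q_l(x,s)) satisfies D*(x,s) = P_d(x)/(P_d(x)+P_g(x)) when the parity of s is 0, and D*(x,s) = P_g(x)/(P_d(x)+P_g(x)) when the parity of s is 1. -/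
open Finset

theorem Fin.card_filter_univ_castSucc {l : ℕ} (p : Fin (l + 1) → Prop) [DecidablePred p] :
    #{i | p i} = #{i : Fin l | p i.castSucc} + if p (Fin.last l) then 1 else 0 := by
  simp only [card_filter, Fin.sum_univ_castSucc]

theorem PAl_apply {X : Type*} (l : ℕ) (P Q : X → ℝ) (x : X) (s : Fin l → Bool) :
    PAl l P Q (x, s) = (if #{i | s i = true} % 2 = 1 then Q x else P x) / 2 ^ l := by
  induction l generalizing P Q with
  | zero => simp [PAl]
  | succ l ih =>
    rw [PAl, Fin.card_filter_univ_castSucc, pow_succ, ← div_div]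
    by_cases hlast : s (Fin.last l) = true
    · simp only [hlast, if_true, ih Q P, Nat.succ_mod_two_eq_one_iff]
      rcases Nat.mod_two_eq_zero_or_one #{i : Fin l | s i.castSucc = true} with h | h <;>
        simp only [h, zero_ne_one, one_ne_zero, if_true, if_false]
    · simp only [hlast, Bool.false_eq_true, if_false, add_zero, ih P Q]

theorem PAl_add_PAl_swap {X : Type*} (l : ℕ) (P Q : X → ℝ) (x : X) (s : Fin l → Bool) :
    PAl l P Q (x, s) + PAl l Q P (x, s) = (P x + Q x) / 2 ^ l := by
  rw [PAl_apply, PAl_apply]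
  split_ifs <;> ring

theorem stmt6_general {X : Type*} (P Q : X → ℝ) :
    ∀ (l : ℕ) (x : X) (s : Fin l → Bool),
      PAl l P Q (x, s) / (PAl l P Q (x, s) + PAl l Q P (x, s)) =
        if (Finset.univ.filter (fun i => s i = true)).card % 2 = 1 then Q x / (P x + Q x)
        else P x / (P x + Q x) := by
  intro l x s
  rw [PAl_add_PAl_swap, PAl_apply, div_div_div_cancel_right₀ (by positivity), ite_div]

theorem stmt6 {X : Type*} [Fintype X] (P Q : X → ℝ) (hP : IsProbF P) (hQ : IsProbF Q)
    (hpos : ∀ x, 0 < P x + Q x) :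
    ∀ (l : ℕ) (x : X) (s : Fin l → Bool),
      PAl l P Q (x, s) / (PAl l P Q (x, s) + PAl l Q P (x, s)) =
        if (Finset.univ.filter (fun i => s i = true)).card % 2 = 1 then Q x / (P x + Q x)
        else P x / (P x + Q x) :=
  stmt6_general P Q
end

section
/- Let P and Q be probability measures on a finite set X. For any function D : X → (0,1), define V(D) = Σ_x P(x) log D(x) + Σ_x Q(x) log(1 − D(x)). Then V(D) ≤ V(D*) where D*(x) = P(x)/(P(x)+Q(x)) (with D* defined arbitrarily in (0,1) where P(x)+Q(x)=0), and the maximum value equals 2·D_JS(P‖Q) − 2 log 2 when D_JS is computed with natural logarithm. -/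
/-!
For each point `x`, the map `d ↦ P x * log d + Q x * log (1 - d)` is maximised on `(0, 1)` at
`d = P x / (P x + Q x)`; this is the two-point Gibbs inequality, which follows from
`log t ≤ t - 1`. At the maximiser the objective is `KL(P ‖ P + Q) + KL(Q ‖ P + Q)`, and halving the
unnormalised mixture `P + Q` adds `log 2` to each of these divergences.
-/

open Real Finset

lemma mul_log_le_mul_log_add_sub {a q : ℝ} (ha : 0 ≤ a) (hq : 0 < q) :
    a * log q ≤ a * log a + q - a := by
  rcases ha.eq_or_lt with rfl | ha
  · simpa using hq.le
  have h := log_le_sub_one_of_pos (div_pos hq ha)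
  rw [log_div hq.ne' ha.ne'] at h
  have := mul_le_mul_of_nonneg_left h ha.le
  rw [mul_sub, mul_sub, mul_one, mul_div_cancel₀ _ ha.ne'] at this
  linarith

lemma mul_log_div {a s : ℝ} (hs : s ≠ 0) : a * log (a / s) = a * log a - a * log s := by
  rcases eq_or_ne a 0 with rfl | ha
  · simp
  rw [log_div ha hs, mul_sub]

lemma mul_log_add_mul_log_one_sub_le {a b d : ℝ} (ha : 0 ≤ a) (hb : 0 ≤ b) (hd₀ : 0 < d)
    (hd₁ : d < 1) :
    a * log d + b * log (1 - d) ≤ a * log (a / (a + b)) + b * log (b / (a + b)) := by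
  rcases (add_nonneg ha hb).eq_or_lt with hs | hs
  · obtain ⟨rfl, rfl⟩ : a = 0 ∧ b = 0 := ⟨by linarith, by linarith⟩
    simp
  have h₁ := mul_log_le_mul_log_add_sub ha (mul_pos hd₀ hs)
  have h₂ := mul_log_le_mul_log_add_sub hb (mul_pos (sub_pos.mpr hd₁) hs)
  rw [log_mul hd₀.ne' hs.ne'] at h₁
  rw [log_mul (sub_pos.mpr hd₁).ne' hs.ne'] at h₂
  rw [mul_log_div hs.ne', mul_log_div hs.ne']
  linarith

lemma mul_log_add_mul_log_one_sub_of_eq_div {a b d : ℝ} (ha : 0 ≤ a) (hb : 0 ≤ b)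
    (hd : a + b ≠ 0 → d = a / (a + b)) :
    a * log d + b * log (1 - d) = a * log (a / (a + b)) + b * log (b / (a + b)) := by
  rcases eq_or_ne (a + b) 0 with hs | hs
  · obtain ⟨rfl, rfl⟩ : a = 0 ∧ b = 0 := ⟨by linarith, by linarith⟩
    simp
  rw [hd hs, one_sub_div hs, add_sub_cancel_left]

lemma klDivF_div_two {X : Type*} [Fintype X] {R M : X → ℝ} (hRM : ∀ x, M x = 0 → R x = 0) :
    klDivF R (fun x => M x / 2) = (∑ x, R x) * log 2 + klDivF R M := by
  rw [klDivF, klDivF, sum_mul, ← sum_add_distrib]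
  refine sum_congr rfl fun x _ => ?_
  rcases eq_or_ne (R x) 0 with hR | hR
  · simp [hR]
  have hM : M x ≠ 0 := fun h => hR (hRM x h)
  rw [show R x / (M x / 2) = 2 * (R x / M x) by ring, log_mul two_ne_zero (div_ne_zero hR hM)]
  ring

theorem stmt7_general {X : Type*} [Fintype X] (P Q : X → ℝ) (hP : IsProbF P) (hQ : IsProbF Q)
    (D Dstar : X → ℝ) (hD : ∀ x, 0 < D x ∧ D x < 1)
    (hDstar : ∀ x, P x + Q x ≠ 0 → Dstar x = P x / (P x + Q x)) :
    (∑ x, P x * Real.log (D x)) + (∑ x, Q x * Real.log (1 - D x)) ≤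
      (∑ x, P x * Real.log (Dstar x)) + (∑ x, Q x * Real.log (1 - Dstar x)) ∧
    (∑ x, P x * Real.log (Dstar x)) + (∑ x, Q x * Real.log (1 - Dstar x)) =
      2 * jsDivF P Q - 2 * Real.log 2 := by
  obtain ⟨hP₀, hP₁⟩ := hP
  obtain ⟨hQ₀, hQ₁⟩ := hQ
  have hopt : (∑ x, P x * log (Dstar x)) + (∑ x, Q x * log (1 - Dstar x)) =
      klDivF P (fun x => P x + Q x) + klDivF Q (fun x => P x + Q x) := by
    rw [← sum_add_distrib, klDivF, klDivF, ← sum_add_distrib]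
    exact sum_congr rfl fun x _ =>
      mul_log_add_mul_log_one_sub_of_eq_div (hP₀ x) (hQ₀ x) (hDstar x)
  refine ⟨?_, ?_⟩
  · rw [hopt, ← sum_add_distrib, klDivF, klDivF, ← sum_add_distrib]
    exact sum_le_sum fun x _ =>
      mul_log_add_mul_log_one_sub_le (hP₀ x) (hQ₀ x) (hD x).1 (hD x).2
  · have hPM : ∀ x, P x + Q x = 0 → P x = 0 := fun x h => by linarith [hP₀ x, hQ₀ x]
    have hQM : ∀ x, P x + Q x = 0 → Q x = 0 := fun x h => by linarith [hP₀ x, hQ₀ x]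
    rw [hopt, jsDivF, klDivF_div_two hPM, klDivF_div_two hQM, hP₁, hQ₁]
    ring

theorem stmt7 {X : Type*} [Fintype X] (P Q : X → ℝ) (hP : IsProbF P) (hQ : IsProbF Q)
    (D Dstar : X → ℝ) (hD : ∀ x, 0 < D x ∧ D x < 1)
    (hDstar : ∀ x, P x + Q x ≠ 0 → Dstar x = P x / (P x + Q x))
    (hDstar' : ∀ x, P x + Q x = 0 → 0 < Dstar x ∧ Dstar x < 1) :
    (∑ x, P x * Real.log (D x)) + (∑ x, Q x * Real.log (1 - D x)) ≤
      (∑ x, P x * Real.log (Dstar x)) + (∑ x, Q x * Real.log (1 - Dstar x)) ∧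
    (∑ x, P x * Real.log (Dstar x)) + (∑ x, Q x * Real.log (1 - Dstar x)) =
      2 * jsDivF P Q - 2 * Real.log 2 :=
  stmt7_general P Q hP hQ D Dstar hD hDstar
end

section
/- Let P and Q be probability measures on a finite set X and let μ_a, μ_b be two probability measures on a finite set S with disjoint supports. Define joint distributions on X × S by P'(x,s) = (P(x)μ_a(s) + Q(x)μ_b(s))/2 and Q'(x,s) = (P(x)μ_b(s) + Q(x)μ_a(s))/2. Then D_JS(P' ‖ Q') = D_JS(P ‖ Q). -/
private lemma ratio_eq (a b c : ℝ) (hc : c ≠ 0) :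
    (a * c / 2) / ((a + b) * c / 4) = a / ((a + b) / 2) := by
  rcases eq_or_ne (a + b) 0 with h | h
  · simp [h]
  · field_simp
    ring

private lemma term_eq (a b m n : ℝ) (h : m = 0 ∨ n = 0) :
    (a * m + b * n) / 2 *
      Real.log (((a * m + b * n) / 2) / ((a + b) * (m + n) / 4)) =
    m * (a * Real.log (a / ((a + b) / 2))) / 2 +
      n * (b * Real.log (b / ((a + b) / 2))) / 2 := by
  rcases h with h | h
  · subst h
    rcases eq_or_ne n 0 with hn | hn
    · simp [hn]
    · have : (b * n) / 2 / ((a + b) * n / 4) = b / ((a + b) / 2) := by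
        have := ratio_eq b a n hn
        rw [show b + a = a + b by ring] at this
        exact this
      simp only [mul_zero, zero_add, zero_mul]
      rw [this]
      ring
  · subst h
    rcases eq_or_ne m 0 with hm | hm
    · simp [hm]
    · have : (a * m) / 2 / ((a + b) * m / 4) = a / ((a + b) / 2) :=
        ratio_eq a b m hm
      simp only [mul_zero, add_zero, zero_mul]
      rw [this]
      ring

private lemma kl_joint {X S : Type*} [Fintype X] [Fintype S] (P Q : X → ℝ) (μa μb : S → ℝ)
    (ha1 : ∑ s, μa s = 1) (hb1 : ∑ s, μb s = 1)
    (hdisj : ∀ s, μa s = 0 ∨ μb s = 0) :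
    klDivF (fun p : X × S => (P p.1 * μa p.2 + Q p.1 * μb p.2) / 2)
      (fun p : X × S => (P p.1 + Q p.1) * (μa p.2 + μb p.2) / 4) =
    (klDivF P (fun x => (P x + Q x) / 2) + klDivF Q (fun x => (P x + Q x) / 2)) / 2 := by
  unfold klDivF
  rw [Fintype.sum_prod_type]
  have : ∀ x : X, ∑ s : S,
      (P x * μa s + Q x * μb s) / 2 *
        Real.log (((P x * μa s + Q x * μb s) / 2) / ((P x + Q x) * (μa s + μb s) / 4)) =
      (P x * Real.log (P x / ((P x + Q x) / 2))) / 2 +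
        (Q x * Real.log (Q x / ((P x + Q x) / 2))) / 2 := by
    intro x
    have : ∀ s : S,
        (P x * μa s + Q x * μb s) / 2 *
          Real.log (((P x * μa s + Q x * μb s) / 2) / ((P x + Q x) * (μa s + μb s) / 4)) =
        μa s * (P x * Real.log (P x / ((P x + Q x) / 2))) / 2 +
          μb s * (Q x * Real.log (Q x / ((P x + Q x) / 2))) / 2 := by
      intro s
      exact term_eq (P x) (Q x) (μa s) (μb s) (hdisj s)
    rw [Finset.sum_congr rfl fun s _ => this s, Finset.sum_add_distrib]
    simp only [mul_div_assoc]
    rw [← Finset.sum_mul, ← Finset.sum_mul, ha1, hb1, one_mul, one_mul]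
  rw [Finset.sum_congr rfl fun x _ => this x, Finset.sum_add_distrib, ← Finset.sum_div,
    ← Finset.sum_div]
  ring

theorem stmt8 {X S : Type*} [Fintype X] [Fintype S] (P Q : X → ℝ) (μa μb : S → ℝ)
    (hP : IsProbF P) (hQ : IsProbF Q) (hμa : IsProbF μa) (hμb : IsProbF μb)
    (hdisj : ∀ s, ¬(0 < μa s ∧ 0 < μb s)) :
    jsDivF (fun p : X × S => (P p.1 * μa p.2 + Q p.1 * μb p.2) / 2)
      (fun p : X × S => (P p.1 * μb p.2 + Q p.1 * μa p.2) / 2) = jsDivF P Q := by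
  have hd : ∀ s, μa s = 0 ∨ μb s = 0 := by
    intro s
    by_contra h
    push_neg at h
    exact hdisj s ⟨lt_of_le_of_ne (hμa.1 s) (Ne.symm h.1), lt_of_le_of_ne (hμb.1 s) (Ne.symm h.2)⟩
  have hd' : ∀ s, μb s = 0 ∨ μa s = 0 := fun s => (hd s).symm
  unfold jsDivF
  have hmix : (fun p : X × S =>
      ((P p.1 * μa p.2 + Q p.1 * μb p.2) / 2 + (P p.1 * μb p.2 + Q p.1 * μa p.2) / 2) / 2) =
      fun p : X × S => (P p.1 + Q p.1) * (μa p.2 + μb p.2) / 4 := by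
    funext p; ring
  have hmix2 : (fun p : X × S => (P p.1 + Q p.1) * (μb p.2 + μa p.2) / 4) =
      fun p : X × S => (P p.1 + Q p.1) * (μa p.2 + μb p.2) / 4 := by
    funext p; ring
  rw [hmix]
  have h1 := kl_joint P Q μa μb hμa.2 hμb.2 hd
  have h2 := kl_joint P Q μb μa hμb.2 hμa.2 hd'
  rw [hmix2] at h2
  rw [h1, h2]
  ring
end
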